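/- arXiv:2601.13287 — 3 statements merged into one kernel-verified Lean document; each statement's English description precedes it below -/
import Mathlib

section
/- Let M be a finite item set, A = (A_1,...,A_n) an allocation in an externalities instance with additive valuations, and i ≠ j agents. Suppose the induced asymmetric-envy instance (v_{i,j}(x) = V_i(i,x) − V_i(j,x)) admits a set S ⊆ A_i ∪ A_j with |S| ≤ c such that v_{i,j}(A_i \ S) ≥ v_{i,j}(A_j \ S). Then, letting B = (A_1 \ S, ..., A_n \ S), we have V_i(B) ≥ V_i(B^{i↔j}). In particular, an allocation is EF-c in the externalities model if and only if it is EF_a-c in the induced asymmetric envy model. -/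
open Finset

/-- Utility of agent `i` under allocation `A` in the externalities model. -/
def extValue {α : Type*} [DecidableEq α] {n : ℕ}
    (V : Fin n → Fin n → α → ℝ) (i : Fin n) (A : Fin n → Finset α) : ℝ :=
  ∑ j : Fin n, ∑ x ∈ A j, V i j x

/-- The allocation obtained from `A` by swapping the bundles of `i` and `j`. -/
def swapAlloc {α : Type*} {n : ℕ} (A : Fin n → Finset α) (i j : Fin n) :
    Fin n → Finset α := fun l => A (Equiv.swap i j l)

/-- If in the induced asymmetric envy instance there is `S ⊆ A_i ∪ A_j` with
`|S| ≤ c` and `v_{i,j}(A_i \ S) ≥ v_{i,j}(A_j \ S)`, then for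
`B = (A_1 \ S, …, A_n \ S)` we have `V_i(B) ≥ V_i(B^{i↔j})`. In particular,
an allocation is EF-c in the externalities model iff it is EF_a-c in the
induced asymmetric envy model. -/
theorem efc_iff_efac {α : Type*} [DecidableEq α] {n : ℕ}
    (M : Finset α) (V : Fin n → Fin n → α → ℝ) (A : Fin n → Finset α)
    (hA : ∀ l, A l ⊆ M)
    (hdisj : ∀ i j : Fin n, i ≠ j → Disjoint (A i) (A j)) (c : ℕ) :
    (∀ (i j : Fin n), i ≠ j → ∀ S : Finset α, S ⊆ A i ∪ A j → S.card ≤ c →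
      (∑ x ∈ A i \ S, (V i i x - V i j x)) ≥ (∑ x ∈ A j \ S, (V i i x - V i j x)) →
      extValue V i (fun l => A l \ S) ≥
        extValue V i (swapAlloc (fun l => A l \ S) i j)) ∧
    ((∀ (i j : Fin n), i ≠ j → ∃ S : Finset α, S ⊆ M ∧ S.card ≤ c ∧
        extValue V i (fun l => A l \ S) ≥
          extValue V i (swapAlloc (fun l => A l \ S) i j)) ↔
      (∀ (i j : Fin n), i ≠ j → ∃ S : Finset α, S ⊆ A i ∪ A j ∧ S.card ≤ c ∧
        (∑ x ∈ A i \ S, (V i i x - V i j x)) ≥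
          (∑ x ∈ A j \ S, (V i i x - V i j x)))) := by
  have key : ∀ (i j : Fin n), i ≠ j → ∀ S : Finset α,
      extValue V i (fun l => A l \ S) - extValue V i (swapAlloc (fun l => A l \ S) i j)
        = (∑ x ∈ A i \ S, (V i i x - V i j x)) - (∑ x ∈ A j \ S, (V i i x - V i j x)) := by
    intro i j hij S
    unfold extValue swapAlloc
    have h2 : (∑ l : Fin n, ∑ x ∈ A (Equiv.swap i j l) \ S, V i l x)
        = ∑ l : Fin n, ∑ x ∈ A l \ S, V i (Equiv.swap i j l) x := by
      apply Fintype.sum_equiv (Equiv.swap i j)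
      intro m
      simp [Equiv.swap_apply_self]
    rw [h2, ← Finset.sum_sub_distrib]
    have h3 : (∑ l : Fin n, ((∑ x ∈ A l \ S, V i l x) - ∑ x ∈ A l \ S, V i (Equiv.swap i j l) x))
        = ∑ l ∈ ({i, j} : Finset (Fin n)),
            ((∑ x ∈ A l \ S, V i l x) - ∑ x ∈ A l \ S, V i (Equiv.swap i j l) x) := by
      refine (Finset.sum_subset (Finset.subset_univ _) ?_).symm
      intro l _ hl
      have h1 : l ≠ i := fun h => hl (by simp [h])
      have h2 : l ≠ j := fun h => hl (by simp [h])
      rw [Equiv.swap_apply_of_ne_of_ne h1 h2]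
      ring
    rw [h3, Finset.sum_pair hij, Equiv.swap_apply_left, Equiv.swap_apply_right,
      Finset.sum_sub_distrib, Finset.sum_sub_distrib]
    ring
  constructor
  · intro i j hij S _ _ hv
    have := key i j hij S
    linarith
  · constructor
    · intro h i j hij
      obtain ⟨S, _, hc, hge⟩ := h i j hij
      refine ⟨S ∩ (A i ∪ A j), Finset.inter_subset_right, le_trans (Finset.card_le_card Finset.inter_subset_left) hc, ?_⟩
      have hAi : A i \ (S ∩ (A i ∪ A j)) = A i \ S := by
        ext x; simp only [Finset.mem_sdiff, Finset.mem_inter, Finset.mem_union]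
        tauto
      have hAj : A j \ (S ∩ (A i ∪ A j)) = A j \ S := by
        ext x; simp only [Finset.mem_sdiff, Finset.mem_inter, Finset.mem_union]
        tauto
      rw [hAi, hAj]
      have := key i j hij S
      linarith
    · intro h i j hij
      obtain ⟨S, hS, hc, hv⟩ := h i j hij
      refine ⟨S, hS.trans (Finset.union_subset (hA i) (hA j)), hc, ?_⟩
      have := key i j hij S
      linarith
end

section
/- Let k ≥ 1 and T ≥ 1 be integers, M a finite set, and v: 2^M → ℝ additive. Then there exist four additive valuation functions v¹, v², v³, v⁴: 2^M → ℝ with vʲ(x) ∈ [0,1] for all j ∈ {1,2,3,4} and x ∈ M, such that: whenever A, B ⊆ M are disjoint sets satisfying |(1/k)vʲ(M) − vʲ(X)| ≤ T for all j ∈ {1,2,3,4} and X ∈ {A,B}, there exists P ⊆ A ∪ B with |P| ≤ 14T and v(A \ P) ≥ v(B \ P), and there exists P' ⊆ A ∪ B with |P'| ≤ 14T and v(B \ P') ≥ v(A \ P'). -/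
/-!
Split `v = v⁺ - v⁻` and treat both parts alike. For a nonnegative `g`, let `H` consist of the
`3Tk` items of largest `g`-value (all positive items if there are fewer) and let `m` be the largest
value of the remaining positive items `S`. The auxiliary valuations are the indicator of `H` and
`g / m` on `S`. Balance for the indicator gives `|X ∩ H| ≤ 4T`; if `S` is nonempty, `H` has
exactly `3Tk` items, so `|X ∩ H| ≥ 2T` and `g(X ∩ H) ≥ 2Tm`, which absorbs the difference of at
most `2Tm` between the `g`-values of `S` in two balanced bundles. Hence A's envy toward B
disappears once B loses its large positive items and A its large negative items: at most `8T`.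
-/

open Finset

section

variable {α : Type*}

theorem Finset.exists_subset_card_eq_min_forall_le [DecidableEq α] {β : Type*} [LinearOrder β]
    (f : α → β) :
    ∀ (n : ℕ) (s : Finset α), ∃ t ⊆ s, #t = min n #s ∧ ∀ x ∈ t, ∀ y ∈ s \ t, f y ≤ f x
  | 0, _ => ⟨∅, empty_subset _, by simp, by simp⟩
  | n + 1, s => by
    rcases s.eq_empty_or_nonempty with rfl | hs
    · exact ⟨∅, empty_subset _, by simp, by simp⟩
    obtain ⟨m, hm, hmax⟩ := s.exists_max_image f hs
    obtain ⟨t, hts, hcard, htop⟩ := exists_subset_card_eq_min_forall_le f n (s.erase m)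
    have hmt : m ∉ t := fun h => by simpa using hts h
    refine ⟨insert m t, insert_subset hm (hts.trans (erase_subset _ _)), ?_, ?_⟩
    · rw [card_insert_of_notMem hmt, hcard, card_erase_of_mem hm]
      have := card_pos.2 hs
      omega
    · simp only [mem_insert, forall_eq_or_imp, mem_sdiff, not_or, and_imp]
      exact ⟨fun y hy _ _ => hmax y hy,
        fun x hx y hy hym hyt => htop x hx y (mem_sdiff.2 ⟨mem_erase.2 ⟨hym, hy⟩, hyt⟩)⟩

def IsBalanced (w : α → ℝ) (M : Finset α) (k T : ℕ) (X : Finset α) : Prop :=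
  |(1 / (k : ℝ)) * (∑ x ∈ M, w x) - ∑ x ∈ X, w x| ≤ T

section IsBalanced

variable {w : α → ℝ} {M X Y : Finset α} {k T : ℕ}

lemma IsBalanced.sum_le (h : IsBalanced w M k T X) :
    ∑ x ∈ X, w x ≤ 1 / (k : ℝ) * ∑ x ∈ M, w x + T := by
  linarith [(abs_le.1 h).1]

lemma IsBalanced.le_sum (h : IsBalanced w M k T X) :
    1 / (k : ℝ) * ∑ x ∈ M, w x - T ≤ ∑ x ∈ X, w x := by
  linarith [(abs_le.1 h).2]

lemma IsBalanced.sum_sub_sum_le (hX : IsBalanced w M k T X) (hY : IsBalanced w M k T Y) :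
    ∑ x ∈ Y, w x - ∑ x ∈ X, w x ≤ 2 * T := by
  linarith [hY.sum_le, hX.le_sum]

end IsBalanced

lemma sum_ite_mem_one [DecidableEq α] (X H : Finset α) :
    ∑ x ∈ X, (if x ∈ H then (1 : ℝ) else 0) = #(X ∩ H) := by
  simp [sum_ite_mem]

section LargeItems

variable [DecidableEq α] {M H X : Finset α} {k T : ℕ}

lemma card_inter_le_of_isBalanced (hHM : H ⊆ M) (hH : #H ≤ 3 * T * k)
    (h : IsBalanced (fun x => if x ∈ H then 1 else 0) M k T X) : #(X ∩ H) ≤ 4 * T := by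
  have hsum := h.sum_le
  rw [sum_ite_mem_one, sum_ite_mem_one, inter_eq_right.2 hHM] at hsum
  have : 1 / (k : ℝ) * #H ≤ 3 * T := by
    rcases k.eq_zero_or_pos with rfl | hk
    · simp
    rw [one_div_mul_eq_div, div_le_iff₀ (by exact_mod_cast hk)]
    exact_mod_cast hH
  exact_mod_cast (show (#(X ∩ H) : ℝ) ≤ 4 * T by linarith)

lemma le_card_inter_of_isBalanced (hk : 0 < k) (hHM : H ⊆ M) (hH : #H = 3 * T * k)
    (h : IsBalanced (fun x => if x ∈ H then 1 else 0) M k T X) : 2 * T ≤ #(X ∩ H) := by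
  have hsum := h.le_sum
  rw [sum_ite_mem_one, sum_ite_mem_one, inter_eq_right.2 hHM, hH] at hsum
  have : 1 / (k : ℝ) * ((3 * T * k : ℕ) : ℝ) = 3 * T := by
    push_cast
    field_simp
  exact_mod_cast (show (2 * T : ℝ) ≤ #(X ∩ H) by linarith)

end LargeItems

lemma sum_inter_le_of_isBalanced [DecidableEq α] {g : α → ℝ} (hg : 0 ≤ g)
    {M H S X Y : Finset α} {k T : ℕ} (hHS : Disjoint H S) {m : ℝ} (hm : 0 < m)
    (hmH : ∀ x ∈ H, m ≤ g x) (hX : 2 * T ≤ #(X ∩ H))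
    (h2X : IsBalanced (fun x => if x ∈ S then g x / m else 0) M k T X)
    (h2Y : IsBalanced (fun x => if x ∈ S then g x / m else 0) M k T Y) :
    ∑ x ∈ Y ∩ S, g x ≤ ∑ x ∈ X, g x := by
  have hsmall : ∑ x ∈ Y ∩ S, g x - ∑ x ∈ X ∩ S, g x ≤ 2 * T * m := by
    have := h2X.sum_sub_sum_le h2Y
    simp only [sum_ite_mem, ← sum_div, ← sub_div] at this
    rwa [div_le_iff₀ hm] at this
  have hlarge : 2 * T * m ≤ ∑ x ∈ X ∩ H, g x := calc
    2 * T * m ≤ #(X ∩ H) * m := by gcongr; exact_mod_cast hX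
    _ ≤ ∑ x ∈ X ∩ H, g x := by
      simpa using card_nsmul_le_sum (X ∩ H) g m fun x hx => hmH x (mem_inter.1 hx).2
  have hsplit : ∑ x ∈ X ∩ H, g x + ∑ x ∈ X ∩ S, g x ≤ ∑ x ∈ X, g x := by
    rw [← sum_union (hHS.mono inter_subset_right inter_subset_right)]
    exact sum_le_sum_of_subset_of_nonneg (union_subset inter_subset_left inter_subset_left)
      fun x _ _ => hg x
  linarith

theorem exists_weights_sum_sdiff_le [DecidableEq α] {g : α → ℝ} (hg : 0 ≤ g) (M : Finset α)
    {k : ℕ} (hk : 0 < k) (T : ℕ) :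
    ∃ H ⊆ M, (∀ x ∈ H, 0 < g x) ∧ ∃ w₁ w₂ : α → ℝ,
      (∀ x ∈ M, 0 ≤ w₁ x ∧ w₁ x ≤ 1) ∧ (∀ x ∈ M, 0 ≤ w₂ x ∧ w₂ x ≤ 1) ∧
      ∀ X Y : Finset α, Y ⊆ M → IsBalanced w₁ M k T X → IsBalanced w₁ M k T Y →
        IsBalanced w₂ M k T X → IsBalanced w₂ M k T Y →
        #(Y ∩ H) ≤ 4 * T ∧ ∑ x ∈ Y \ H, g x ≤ ∑ x ∈ X, g x := by
  set Pos := M.filter (0 < g ·)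
  obtain ⟨H, hHPos, hHcard, htop⟩ := exists_subset_card_eq_min_forall_le g (3 * T * k) Pos
  set S := Pos \ H
  obtain ⟨m, hm, hSm, hmH⟩ :
      ∃ m : ℝ, 0 < m ∧ (∀ x ∈ S, g x ≤ m) ∧ (S.Nonempty → ∀ x ∈ H, m ≤ g x) := by
    rcases S.eq_empty_or_nonempty with hS | hS
    · exact ⟨1, one_pos, by simp [hS], by simp [hS]⟩
    obtain ⟨y, hy, hmax⟩ := S.exists_max_image g hS
    exact ⟨g y, (mem_filter.1 (mem_sdiff.1 hy).1).2, hmax, fun _ x hx => htop x hx y hy⟩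
  have hHM : H ⊆ M := hHPos.trans (filter_subset _ _)
  refine ⟨H, hHM, fun x hx => (mem_filter.1 (hHPos hx)).2,
    fun x => if x ∈ H then 1 else 0, fun x => if x ∈ S then g x / m else 0,
    fun x _ => by dsimp only; split_ifs <;> norm_num, fun x _ => ?_, ?_⟩
  · dsimp only
    split_ifs with hx
    · exact ⟨div_nonneg (hg x) hm.le, div_le_one_of_le₀ (hSm x hx) hm.le⟩
    · simp
  intro X Y hY h1X h1Y h2X h2Y
  refine ⟨card_inter_le_of_isBalanced hHM (hHcard.trans_le (min_le_left _ _)) h1Y, ?_⟩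
  have hYS : ∑ x ∈ Y \ H, g x = ∑ x ∈ Y ∩ S, g x := by
    refine (sum_subset (fun x hx => ?_) fun x hx hxS => ?_).symm
    · simp_all [S]
    · obtain ⟨hxY, hxH⟩ := mem_sdiff.1 hx
      have : ¬ 0 < g x := fun hpos =>
        hxS (mem_inter.2 ⟨hxY, mem_sdiff.2 ⟨mem_filter.2 ⟨hY hxY, hpos⟩, hxH⟩⟩)
      exact le_antisymm (not_lt.1 this) (hg x)
  rw [hYS]
  rcases S.eq_empty_or_nonempty with hS | hS
  · simpa [hS] using sum_nonneg fun x _ => hg x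
  have hHfull : #H = 3 * T * k := by
    have : #H < #Pos :=
      card_lt_card ⟨hHPos, fun h => by simp [S, sdiff_eq_empty_iff_subset.2 h] at hS⟩
    omega
  exact sum_inter_le_of_isBalanced hg disjoint_sdiff hm (hmH hS)
    (le_card_inter_of_isBalanced hk hHM hHfull h1X) h2X h2Y

theorem exists_subset_union_sum_sdiff_le [DecidableEq α] (v : α → ℝ) {A B Hp Hn : Finset α}
    (hAB : Disjoint A B) {T : ℕ} (hHp : ∀ x ∈ Hp, 0 < v⁺ x) (hHn : ∀ x ∈ Hn, 0 < v⁻ x)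
    (hBHp : #(B ∩ Hp) ≤ 4 * T) (hAHn : #(A ∩ Hn) ≤ 4 * T)
    (hpos : ∑ x ∈ B \ Hp, v⁺ x ≤ ∑ x ∈ A, v⁺ x) (hneg : ∑ x ∈ A \ Hn, v⁻ x ≤ ∑ x ∈ B, v⁻ x) :
    ∃ P ⊆ A ∪ B, #P ≤ 8 * T ∧ ∑ x ∈ B \ P, v x ≤ ∑ x ∈ A \ P, v x := by
  refine ⟨B ∩ Hp ∪ A ∩ Hn, union_subset (inter_subset_left.trans subset_union_right)
    (inter_subset_left.trans subset_union_left), (card_union_le _ _).trans (by omega), ?_⟩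
  have hA : A \ (B ∩ Hp ∪ A ∩ Hn) = A \ Hn := by
    ext x; grind [disjoint_left]
  have hB : B \ (B ∩ Hp ∪ A ∩ Hn) = B \ Hp := by
    ext x; grind [disjoint_left]
  have hsplit : ∀ s : Finset α, ∑ x ∈ s, v x = ∑ x ∈ s, v⁺ x - ∑ x ∈ s, v⁻ x := fun s => by
    simp [← sum_sub_distrib]
  have hA' : ∑ x ∈ A \ Hn, v⁺ x = ∑ x ∈ A, v⁺ x := sum_subset sdiff_subset fun x hxA hx =>
    posPart_eq_zero.2 (negPart_pos_iff.1 (hHn x (by simp_all))).le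
  have hB' : ∑ x ∈ B \ Hp, v⁻ x = ∑ x ∈ B, v⁻ x := sum_subset sdiff_subset fun x hxB hx =>
    negPart_eq_zero.2 (posPart_pos_iff.1 (hHp x (by simp_all))).le
  rw [hA, hB, hsplit, hsplit]
  linarith

end

theorem disc_to_efk_general {α : Type*} [DecidableEq α]
    (M : Finset α) (v : α → ℝ) (k T : ℕ) (hk : 1 ≤ k) :
    ∃ w : Fin 4 → α → ℝ,
      (∀ (j : Fin 4), ∀ x ∈ M, 0 ≤ w j x ∧ w j x ≤ 1) ∧
      ∀ A B : Finset α, A ⊆ M → B ⊆ M → Disjoint A B →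
        (∀ (j : Fin 4), ∀ X ∈ ({A, B} : Set (Finset α)),
          |(1 / (k : ℝ)) * (∑ x ∈ M, w j x) - ∑ x ∈ X, w j x| ≤ (T : ℝ)) →
        (∃ P : Finset α, P ⊆ A ∪ B ∧ P.card ≤ 14 * T ∧
          (∑ x ∈ A \ P, v x) ≥ ∑ x ∈ B \ P, v x) ∧
        (∃ P' : Finset α, P' ⊆ A ∪ B ∧ P'.card ≤ 14 * T ∧
          (∑ x ∈ B \ P', v x) ≥ ∑ x ∈ A \ P', v x) := by
  obtain ⟨Hp, -, hHp, w₁, w₂, hw₁, hw₂, hpos⟩ :=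
    exists_weights_sum_sdiff_le (posPart_nonneg v) M hk T
  obtain ⟨Hn, -, hHn, w₃, w₄, hw₃, hw₄, hneg⟩ :=
    exists_weights_sum_sdiff_le (negPart_nonneg v) M hk T
  set w := ![w₁, w₂, w₃, w₄]
  have envy : ∀ A B : Finset α, A ⊆ M → B ⊆ M → Disjoint A B →
      (∀ j, IsBalanced (w j) M k T A ∧ IsBalanced (w j) M k T B) →
      ∃ P ⊆ A ∪ B, #P ≤ 14 * T ∧ ∑ x ∈ B \ P, v x ≤ ∑ x ∈ A \ P, v x := by
    intro A B hA hB hAB hbal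
    obtain ⟨hBHp, hposB⟩ := hpos A B hB (hbal 0).1 (hbal 0).2 (hbal 1).1 (hbal 1).2
    obtain ⟨hAHn, hnegA⟩ := hneg B A hA (hbal 2).2 (hbal 2).1 (hbal 3).2 (hbal 3).1
    obtain ⟨P, hP, hcard, hle⟩ :=
      exists_subset_union_sum_sdiff_le v hAB hHp hHn hBHp hAHn hposB hnegA
    exact ⟨P, hP, by omega, hle⟩
  refine ⟨w, fun j => by fin_cases j; exacts [hw₁, hw₂, hw₃, hw₄], ?_⟩
  intro A B hA hB hAB hbal
  have hbal' : ∀ j, IsBalanced (w j) M k T A ∧ IsBalanced (w j) M k T B :=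
    fun j => ⟨hbal j A (by simp), hbal j B (by simp)⟩
  obtain ⟨P, hP, hcard, hle⟩ := envy A B hA hB hAB hbal'
  obtain ⟨P', hP', hcard', hle'⟩ := envy B A hB hA hAB.symm fun j => (hbal' j).symm
  exact ⟨⟨P, hP, hcard, hle⟩, ⟨P', union_comm A B ▸ hP', hcard', hle'⟩⟩

/-- The disc-to-EF-k lemma: for any additive valuation `v` (with possibly
positive and negative item values) there exist four `[0,1]`-valued additive
valuations such that whenever disjoint sets `A, B` are `T`-balanced with
respect to all four auxiliary valuations, the envy between `A` and `B` (in
either direction, with respect to `v`) can be eliminated by discarding at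
most `14T` items. -/
theorem disc_to_efk {α : Type*} [DecidableEq α]
    (M : Finset α) (v : α → ℝ) (k T : ℕ) (hk : 1 ≤ k) (hT : 1 ≤ T) :
    ∃ w : Fin 4 → α → ℝ,
      (∀ (j : Fin 4), ∀ x ∈ M, 0 ≤ w j x ∧ w j x ≤ 1) ∧
      ∀ A B : Finset α, A ⊆ M → B ⊆ M → Disjoint A B →
        (∀ (j : Fin 4), ∀ X ∈ ({A, B} : Set (Finset α)),
          |(1 / (k : ℝ)) * (∑ x ∈ M, w j x) - ∑ x ∈ X, w j x| ≤ (T : ℝ)) →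
        (∃ P : Finset α, P ⊆ A ∪ B ∧ P.card ≤ 14 * T ∧
          (∑ x ∈ A \ P, v x) ≥ ∑ x ∈ B \ P, v x) ∧
        (∃ P' : Finset α, P' ⊆ A ∪ B ∧ P'.card ≤ 14 * T ∧
          (∑ x ∈ B \ P', v x) ≥ ∑ x ∈ A \ P', v x) :=
  disc_to_efk_general M v k T hk
end

section
/- For every c ≥ 1 and every sufficiently large odd n, if every instance of the asymmetric envy model with n agents and binary additive valuations admits an EF_a-c allocation, then every collection of q = (n−1)/2 binary additive valuation functions V over any finite item set satisfies wdisc_{1/n}(V) ≤ 6c. Consequently, combined with the existence of q binary additive valuations with wdisc_{1/n}(V) ≥ √(q−1)/16, any universal EF_a-c guarantee for binary asymmetric envy instances with n agents requires c ≥ √((n−1)/2 − 1)/96. -/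
/-!
Split the `n = 2q + 1` agents into a hub and two copies `(s, k)`, `s : Bool`, of each of the
`q` valuations. Every ordered pair of agents is assigned one of the valuations: the hub and
`(s, k)` use `w k` toward each other, two agents on the same side use the envier's index, and
two agents on opposite sides use the envied agent's index. Then for every `k` each agent can be
reached from the hub, and can reach the hub, in at most two envy steps all judged by `w k`. An
EF_a-c allocation bounds each step by `c`, so under every `w k` all bundles are within `2c` of
the hub's bundle, which is therefore within `2c` of the `1/n`-share of every valuation.
-/

open Finset

/-- An EF_a-c allocation of `M` among the agents `ι`, where `v i j` is the valuation agent `i`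
uses to compare its bundle with that of agent `j`. -/
def IsEFacAllocation {ι α : Type*} [Fintype ι] [DecidableEq α] (c : ℕ) (M : Finset α)
    (v : ι → ι → α → ℝ) (A : ι → Finset α) : Prop :=
  (∀ i j, i ≠ j → Disjoint (A i) (A j)) ∧ univ.biUnion A = M ∧
    ∀ i j, i ≠ j → ∃ P : Finset α, P ⊆ A i ∪ A j ∧ P.card ≤ c ∧
      (∑ x ∈ A i \ P, v i j x) ≥ ∑ x ∈ A j \ P, v i j x

theorem sum_le_sum_add_of_sum_sdiff_le {α : Type*} [DecidableEq α] {v : α → ℝ}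
    (hv₀ : ∀ x, 0 ≤ v x) (hv₁ : ∀ x, v x ≤ 1) {S T P : Finset α} {c : ℕ} (hP : P.card ≤ c)
    (h : ∑ x ∈ T \ P, v x ≤ ∑ x ∈ S \ P, v x) :
    ∑ x ∈ T, v x ≤ ∑ x ∈ S, v x + c := by
  have hTP : ∑ x ∈ T ∩ P, v x ≤ c :=
    calc ∑ x ∈ T ∩ P, v x ≤ ∑ _x ∈ T ∩ P, (1 : ℝ) := sum_le_sum fun x _ => hv₁ x
      _ = (T ∩ P).card := by simp
      _ ≤ c := by exact_mod_cast (card_le_card inter_subset_right).trans hP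
  have hSP : ∑ x ∈ S \ P, v x ≤ ∑ x ∈ S, v x :=
    sum_le_sum_of_subset_of_nonneg sdiff_subset fun x _ _ => hv₀ x
  linarith [sum_inter_add_sum_sdiff T P v]

namespace IsEFacAllocation

variable {ι α : Type*} [Fintype ι] [DecidableEq α] {c : ℕ} {M : Finset α}
  {v : ι → ι → α → ℝ} {A : ι → Finset α}

theorem subset (hA : IsEFacAllocation c M v A) (i : ι) : A i ⊆ M :=
  hA.2.1 ▸ subset_biUnion_of_mem A (mem_univ i)

theorem sum_eq (hA : IsEFacAllocation c M v A) (f : α → ℝ) :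
    ∑ x ∈ M, f x = ∑ i, ∑ x ∈ A i, f x := by
  rw [← hA.2.1, sum_biUnion fun i _ j _ hij => hA.1 i j hij]

theorem sum_le_sum_add (hA : IsEFacAllocation c M v A) (hv : ∀ i j x, v i j x = 0 ∨ v i j x = 1)
    {i j : ι} (hij : i ≠ j) : ∑ x ∈ A j, v i j x ≤ ∑ x ∈ A i, v i j x + c := by
  obtain ⟨P, -, hP, hle⟩ := hA.2.2 i j hij
  refine sum_le_sum_add_of_sum_sdiff_le (fun x => ?_) (fun x => ?_) hP hle <;>
    rcases hv i j x with h | h <;> simp [h]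

end IsEFacAllocation

theorem abs_mul_sum_sub_le_of_forall_abs_sub_le {ι : Type*} [Fintype ι] [Nonempty ι]
    (g : ι → ℝ) {a D : ℝ} (h : ∀ i, |g i - a| ≤ D) :
    |(1 / (Fintype.card ι : ℝ)) * ∑ i, g i - a| ≤ D := by
  have hN : (0 : ℝ) < Fintype.card ι := by exact_mod_cast Fintype.card_pos
  have hsplit : (1 / (Fintype.card ι : ℝ)) * ∑ i, g i - a
      = (1 / (Fintype.card ι : ℝ)) * ∑ i, (g i - a) := by
    rw [sum_sub_distrib, sum_const, card_univ, nsmul_eq_mul]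
    field_simp
  rw [hsplit, abs_mul, abs_of_pos (by positivity), one_div_mul_eq_div, div_le_iff₀ hN]
  calc |∑ i, (g i - a)| ≤ ∑ i, |g i - a| := abs_sum_le_sum_abs _ _
    _ ≤ ∑ _i : ι, D := sum_le_sum fun i _ => h i
    _ = D * Fintype.card ι := by rw [sum_const, card_univ, nsmul_eq_mul, mul_comm]

abbrev Agent (κ : Type*) := Option (Bool × κ)

def pairLabel {κ : Type*} : Agent κ → Agent κ → Option κ
  | none, none => none
  | none, some (_, k) => some k
  | some (_, k), none => some k
  | some (s, k), some (t, m) => some (if s = t then k else m)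

def pairValuation {κ α : Type*} (w : κ → α → ℝ) (x y : Agent κ) : α → ℝ :=
  (pairLabel x y).elim 0 w

theorem pairValuation_eq_zero_or_eq_one {κ α : Type*} {w : κ → α → ℝ}
    (hw : ∀ k a, w k a = 0 ∨ w k a = 1) (x y : Agent κ) (a : α) :
    pairValuation w x y a = 0 ∨ pairValuation w x y a = 1 := by
  unfold pairValuation
  cases pairLabel x y <;> simp [hw]

theorem abs_sub_hub_le {κ : Type*} (u : κ → Agent κ → ℝ) {c : ℝ} (hc : 0 ≤ c)
    (h : ∀ x y k, x ≠ y → pairLabel x y = some k → u k y ≤ u k x + c) (k : κ) (x : Agent κ) :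
    |u k x - u k none| ≤ 2 * c := by
  rcases x with _ | ⟨s, m⟩
  · simpa using hc
  have hub_to (t : Bool) : u k (some (t, k)) ≤ u k none + c := h _ _ k (by simp) rfl
  have to_hub (t : Bool) : u k none ≤ u k (some (t, k)) + c := h _ _ k (by simp) rfl
  have cross : u k (some (!s, k)) ≤ u k (some (s, m)) + c := h _ _ k (by simp) (by simp [pairLabel])
  have upper : u k (some (s, m)) ≤ u k none + 2 * c := by
    by_cases hmk : m = k
    · subst hmk; linarith [hub_to s]
    · have same : u k (some (s, m)) ≤ u k (some (s, k)) + c :=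
        h (some (s, k)) (some (s, m)) k (by simp [Ne.symm hmk]) (by simp [pairLabel])
      linarith [hub_to s]
  rw [abs_le]
  constructor <;> linarith [to_hub (!s)]

theorem exists_subset_abs_sub_le_two_mul {ι κ α : Type*} [Fintype ι] [DecidableEq α]
    (e : ι ≃ Agent κ) (c : ℕ) (M : Finset α) (w : κ → α → ℝ)
    (hw : ∀ k x, w k x = 0 ∨ w k x = 1)
    (H : ∃ A, IsEFacAllocation c M (fun i j => pairValuation w (e i) (e j)) A) :
    ∃ B ⊆ M, ∀ k, |(1 / (Fintype.card ι : ℝ)) * ∑ x ∈ M, w k x - ∑ x ∈ B, w k x| ≤ 2 * c := by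
  obtain ⟨A, hA⟩ := H
  have hv i j := pairValuation_eq_zero_or_eq_one hw (e i) (e j)
  have hedge : ∀ x y k, x ≠ y → pairLabel x y = some k →
      ∑ a ∈ A (e.symm y), w k a ≤ ∑ a ∈ A (e.symm x), w k a + c := by
    intro x y k hxy hk
    simpa [pairValuation, hk] using hA.sum_le_sum_add hv (e.symm.injective.ne hxy)
  have : Nonempty ι := ⟨e.symm none⟩
  refine ⟨A (e.symm none), hA.subset _, fun k => ?_⟩
  rw [hA.sum_eq]
  refine abs_mul_sum_sub_le_of_forall_abs_sub_le _ fun i => ?_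
  simpa using abs_sub_hub_le (fun k x => ∑ a ∈ A (e.symm x), w k a) (Nat.cast_nonneg c) hedge k
    (e i)

theorem efac_lower_bound_general (c n : ℕ) (hodd : Odd n)
    (H : ∀ (α : Type) [DecidableEq α] (M : Finset α)
      (vv : Fin n → Fin n → α → ℝ),
      (∀ (i j : Fin n) (x : α), vv i j x = 0 ∨ vv i j x = 1) →
      ∃ A : Fin n → Finset α,
        (∀ i j : Fin n, i ≠ j → Disjoint (A i) (A j)) ∧
        Finset.univ.biUnion A = M ∧
        ∀ i j : Fin n, i ≠ j → ∃ P : Finset α, P ⊆ A i ∪ A j ∧ P.card ≤ c ∧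
          (∑ x ∈ A i \ P, vv i j x) ≥ ∑ x ∈ A j \ P, vv i j x) :
    (∀ (α : Type) (M : Finset α) (w : Fin ((n - 1) / 2) → α → ℝ),
      (∀ (i : Fin ((n - 1) / 2)) (x : α), w i x = 0 ∨ w i x = 1) →
      ∃ B : Finset α, B ⊆ M ∧ ∀ i : Fin ((n - 1) / 2),
        |(1 / (n : ℝ)) * (∑ x ∈ M, w i x) - ∑ x ∈ B, w i x| ≤ 6 * c) ∧
    ((∃ (α : Type) (M : Finset α) (w : Fin ((n - 1) / 2) → α → ℝ),
        (∀ (i : Fin ((n - 1) / 2)) (x : α), w i x = 0 ∨ w i x = 1) ∧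
        ∀ B : Finset α, B ⊆ M → ∃ i : Fin ((n - 1) / 2),
          Real.sqrt ((((n - 1) / 2 : ℕ) : ℝ) - 1) / 16 ≤
            |(1 / (n : ℝ)) * (∑ x ∈ M, w i x) - ∑ x ∈ B, w i x|) →
      (c : ℝ) ≥ Real.sqrt ((((n - 1) / 2 : ℕ) : ℝ) - 1) / 96) := by
  classical
  have e : Fin n ≃ Agent (Fin ((n - 1) / 2)) :=
    Fintype.equivOfCardEq (by obtain ⟨t, rfl⟩ := hodd; simp)
  have upper : ∀ (α : Type) (M : Finset α) (w : Fin ((n - 1) / 2) → α → ℝ),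
      (∀ i x, w i x = 0 ∨ w i x = 1) → ∃ B ⊆ M, ∀ i,
        |(1 / (n : ℝ)) * (∑ x ∈ M, w i x) - ∑ x ∈ B, w i x| ≤ 6 * c := by
    intro α M w hw
    obtain ⟨B, hBM, hB⟩ := exists_subset_abs_sub_le_two_mul e c M w hw
      (H α M _ fun i j => pairValuation_eq_zero_or_eq_one hw (e i) (e j))
    refine ⟨B, hBM, fun i => ?_⟩
    have hBi := hB i
    rw [Fintype.card_fin] at hBi
    linarith [(Nat.cast_nonneg c : (0 : ℝ) ≤ c)]
  refine ⟨upper, ?_⟩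
  rintro ⟨α, M, w, hw, hard⟩
  obtain ⟨B, hBM, hB⟩ := upper α M w hw
  obtain ⟨i, hi⟩ := hard B hBM
  linarith [hi.trans (hB i)]

/-- If every binary asymmetric envy instance with `n` agents admits an
EF_a-c allocation, then every collection of `q = (n-1)/2` binary additive
valuations has `1/n`-weighted discrepancy at most `6c`; consequently, given
a collection with discrepancy at least `√(q-1)/16`, we get
`c ≥ √((n-1)/2 - 1)/96`. -/
theorem efac_lower_bound (c n : ℕ) (hc : 1 ≤ c) (hodd : Odd n) (hn : 3 ≤ n)
    (H : ∀ (α : Type) [DecidableEq α] (M : Finset α)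
      (vv : Fin n → Fin n → α → ℝ),
      (∀ (i j : Fin n) (x : α), vv i j x = 0 ∨ vv i j x = 1) →
      ∃ A : Fin n → Finset α,
        (∀ i j : Fin n, i ≠ j → Disjoint (A i) (A j)) ∧
        Finset.univ.biUnion A = M ∧
        ∀ i j : Fin n, i ≠ j → ∃ P : Finset α, P ⊆ A i ∪ A j ∧ P.card ≤ c ∧
          (∑ x ∈ A i \ P, vv i j x) ≥ ∑ x ∈ A j \ P, vv i j x) :
    (∀ (α : Type) (M : Finset α) (w : Fin ((n - 1) / 2) → α → ℝ),
      (∀ (i : Fin ((n - 1) / 2)) (x : α), w i x = 0 ∨ w i x = 1) →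
      ∃ B : Finset α, B ⊆ M ∧ ∀ i : Fin ((n - 1) / 2),
        |(1 / (n : ℝ)) * (∑ x ∈ M, w i x) - ∑ x ∈ B, w i x| ≤ 6 * c) ∧
    ((∃ (α : Type) (M : Finset α) (w : Fin ((n - 1) / 2) → α → ℝ),
        (∀ (i : Fin ((n - 1) / 2)) (x : α), w i x = 0 ∨ w i x = 1) ∧
        ∀ B : Finset α, B ⊆ M → ∃ i : Fin ((n - 1) / 2),
          Real.sqrt ((((n - 1) / 2 : ℕ) : ℝ) - 1) / 16 ≤
            |(1 / (n : ℝ)) * (∑ x ∈ M, w i x) - ∑ x ∈ B, w i x|) →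
      (c : ℝ) ≥ Real.sqrt ((((n - 1) / 2 : ℕ) : ℝ) - 1) / 96) :=
  efac_lower_bound_general c n hodd H
end
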